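/- arXiv:1901.02205 — 2 statements merged into one kernel-verified Lean document; each statement's English description precedes it below -/
import Mathlib

section
/- Let α ∈ [0,1) and γ ∈ [α,1). Then for every integer n ≥ 2, the inequality Σ_{k=1}^{n−1} 1/((n−k)^γ k^α) ≤ B(1−α, 1−γ) · n^{1−γ−α} holds, where B(1−α,1−γ) = ∫₀¹ x^{−α}(1−x)^{−γ} dx is the Euler Beta function. -/
/-!
The summand `x ↦ x^{-α} (n - x)^{-γ}` is log-convex, hence convex, on `(0, n)`. By the left
Hermite–Hadamard inequality each term `f k` is at most `∫_{k-1/2}^{k+1/2} f`, so the sum is at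
most `∫_0^n f`, and the substitution `x = n t` turns this integral into `B(1-α, 1-γ) n^{1-γ-α}`.
The integral converges because `f` is dominated by a multiple of `x^{-α} + (n - x)^{-γ}`.
-/

open MeasureTheory Set ContinuousLinearMap

noncomputable section

/-- The Lebesgue measure on the time interval `I = [0,T]`. -/
def timeMeasure (T : ℝ) : Measure ℝ := volume.restrict (Set.Icc 0 T)

/-- A strongly continuous contraction semigroup `S τ = e^{-τ G}` on a complex normed space. -/
structure IsContractionSemigroup {E : Type*} [NormedAddCommGroup E] [NormedSpace ℂ E]
    (S : ℝ → E →L[ℂ] E) : Prop where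
  map_zero : S 0 = 1
  map_add : ∀ ⦃s t : ℝ⦄, 0 ≤ s → 0 ≤ t → S (s + t) = S s ∘L S t
  norm_le_one : ∀ ⦃t : ℝ⦄, 0 ≤ t → ‖S t‖ ≤ 1
  strong_continuity : ∀ x : E, ContinuousOn (fun t => S t x) (Set.Ici 0)

/-- `K` is the generator of the semigroup `S`, with the sign convention `S τ = e^{-τ K}`:
the domain of `K` consists exactly of those vectors where the semigroup is differentiable
from the right at `τ = 0`, and there the derivative equals `-(K x)`. -/
def IsGenerator {E : Type*} [NormedAddCommGroup E] [NormedSpace ℂ E]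
    (S : ℝ → E →L[ℂ] E) (K : E →ₗ.[ℂ] E) : Prop :=
  (∀ x : E, x ∈ K.domain ↔ ∃ y : E, HasDerivWithinAt (fun τ => S τ x) y (Set.Ici 0) 0) ∧
  ∀ (x : E) (hx : x ∈ K.domain),
    HasDerivWithinAt (fun τ => S τ x) (-(K ⟨x, hx⟩)) (Set.Ici 0) 0

theorem ConvexOn.rexp {s : Set ℝ} {f : ℝ → ℝ} (hf : ConvexOn ℝ s f) :
    ConvexOn ℝ s (fun x => Real.exp (f x)) :=
  ⟨hf.1, fun _ hx _ hy _ _ ha hb hab =>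
    (Real.exp_le_exp.2 (hf.2 hx hy ha hb hab)).trans
      (convexOn_exp.2 (mem_univ _) (mem_univ _) ha hb hab)⟩

theorem ConvexOn.mul_le_intervalIntegral {f : ℝ → ℝ} {a b : ℝ} (hab : a ≤ b)
    (hf : ConvexOn ℝ (Icc a b) f) (hfi : IntervalIntegrable f volume a b) :
    (b - a) * f ((a + b) / 2) ≤ ∫ x in a..b, f x := by
  have hreflect : ∫ x in a..b, f (a + b - x) = ∫ x in a..b, f x := by
    simp [intervalIntegral.integral_comp_sub_left]
  have hfi' : IntervalIntegrable (fun x => f (a + b - x)) volume a b := by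
    simpa using hfi.symm.comp_sub_left (a + b)
  have hmid : ∀ x ∈ Icc a b, 2 * f ((a + b) / 2) ≤ f x + f (a + b - x) := by
    intro x hx
    have hx' : a + b - x ∈ Icc a b := ⟨by linarith [hx.2], by linarith [hx.1]⟩
    have := hf.2 hx hx' (by norm_num : (0 : ℝ) ≤ 1 / 2) (by norm_num : (0 : ℝ) ≤ 1 / 2)
      (by norm_num)
    simp only [smul_eq_mul] at this
    rw [show 1 / 2 * x + 1 / 2 * (a + b - x) = (a + b) / 2 by ring] at this
    linarith
  have := intervalIntegral.integral_mono_on hab intervalIntegrable_const (hfi.add hfi') hmid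
  rw [intervalIntegral.integral_const, intervalIntegral.integral_add hfi hfi', hreflect,
    smul_eq_mul] at this
  linarith

theorem ConvexOn.sum_Ico_le_intervalIntegral {f : ℝ → ℝ} {m n : ℕ} (hmn : m ≤ n)
    (hf : ConvexOn ℝ (Icc ((m : ℝ) - 1 / 2) (n - 1 / 2)) f)
    (hfi : IntervalIntegrable f volume ((m : ℝ) - 1 / 2) (n - 1 / 2)) :
    ∑ k ∈ Finset.Ico m n, f k ≤ ∫ x in ((m : ℝ) - 1 / 2)..(n - 1 / 2), f x := by
  have hsub : ∀ k ∈ Ico m n,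
      Icc ((k : ℝ) - 1 / 2) (((k + 1 : ℕ) : ℝ) - 1 / 2) ⊆ Icc ((m : ℝ) - 1 / 2) (n - 1 / 2) := by
    intro k hk
    have hmk : (m : ℝ) ≤ k := by exact_mod_cast hk.1
    have hkn : ((k + 1 : ℕ) : ℝ) ≤ n := by exact_mod_cast hk.2
    exact Icc_subset_Icc (by linarith) (by linarith)
  have hint : ∀ k ∈ Ico m n,
      IntervalIntegrable f volume ((k : ℝ) - 1 / 2) (((k + 1 : ℕ) : ℝ) - 1 / 2) := by
    intro k hk
    refine hfi.mono_set ?_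
    have hmn' : (m : ℝ) ≤ n := by exact_mod_cast hmn
    rw [uIcc_of_le (by push_cast; linarith), uIcc_of_le (by linarith)]
    exact hsub k hk
  rw [← intervalIntegral.sum_integral_adjacent_intervals_Ico hmn hint]
  refine Finset.sum_le_sum fun k hk => ?_
  have hk : k ∈ Ico m n := Finset.mem_Ico.1 hk
  have := (hf.subset (hsub k hk) (convex_Icc _ _)).mul_le_intervalIntegral
    (by push_cast; linarith) (hint k hk)
  push_cast at this ⊢
  rwa [show (k : ℝ) + 1 - 1 / 2 - (k - 1 / 2) = 1 by ring,
    show ((k : ℝ) - 1 / 2 + (k + 1 - 1 / 2)) / 2 = k by ring, one_mul] at this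

def betaKernel (α γ N x : ℝ) : ℝ := 1 / (x ^ α * (N - x) ^ γ)

section BetaKernel

variable {α γ N : ℝ}

theorem betaKernel_nonneg {x : ℝ} (hx : x ∈ Icc 0 N) : 0 ≤ betaKernel α γ N x :=
  one_div_nonneg.2 (mul_nonneg (Real.rpow_nonneg hx.1 _) (Real.rpow_nonneg (sub_nonneg.2 hx.2) _))

theorem measurable_betaKernel (α γ N : ℝ) : Measurable (betaKernel α γ N) := by
  unfold betaKernel
  fun_prop

theorem convexOn_neg_log_sub (N : ℝ) : ConvexOn ℝ (Iio N) (fun x => -Real.log (N - x)) := by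
  refine ⟨convex_Iio N, fun x hx y hy a b ha hb hab => ?_⟩
  have := strictConcaveOn_log_Ioi.concaveOn.neg.2 (mem_Ioi.2 (sub_pos.2 hx))
    (mem_Ioi.2 (sub_pos.2 hy)) ha hb hab
  simp only [smul_eq_mul, Pi.neg_apply] at this ⊢
  rwa [show N - (a * x + b * y) = a * (N - x) + b * (N - y) by linear_combination -N * hab]

theorem convexOn_betaKernel (hα : 0 ≤ α) (hγ : 0 ≤ γ) :
    ConvexOn ℝ (Ioo 0 N) (betaKernel α γ N) := by
  have hlog : ConvexOn ℝ (Ioo 0 N) (fun x => α • -Real.log x + γ • -Real.log (N - x)) :=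
    ((strictConcaveOn_log_Ioi.concaveOn.neg.smul hα).subset Ioo_subset_Ioi_self
      (convex_Ioo 0 N)).add
      (((convexOn_neg_log_sub N).smul hγ).subset Ioo_subset_Iio_self (convex_Ioo 0 N))
  refine hlog.rexp.congr fun x hx => ?_
  rw [betaKernel, Real.rpow_def_of_pos hx.1, Real.rpow_def_of_pos (sub_pos.2 hx.2),
    ← Real.exp_add, one_div, ← Real.exp_neg]
  simp only [smul_eq_mul]
  ring_nf

theorem betaKernel_le_add (hα : 0 ≤ α) (hγ : 0 ≤ γ) {x : ℝ} (hx : x ∈ Ioo 0 N) :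
    betaKernel α γ N x ≤ (N / 2) ^ (-γ) * x ^ (-α) + (N / 2) ^ (-α) * (N - x) ^ (-γ) := by
  have hx0 := hx.1
  have hxN := sub_pos.2 hx.2
  have hkernel : betaKernel α γ N x = x ^ (-α) * (N - x) ^ (-γ) := by
    rw [betaKernel, Real.rpow_neg hx0.le, Real.rpow_neg hxN.le, one_div, mul_inv]
  have hleft := mul_nonneg (Real.rpow_nonneg (by linarith : 0 ≤ N / 2) (-γ))
    (Real.rpow_nonneg hx0.le (-α))
  have hright := mul_nonneg (Real.rpow_nonneg (by linarith : 0 ≤ N / 2) (-α))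
    (Real.rpow_nonneg hxN.le (-γ))
  rw [hkernel]
  rcases le_total x (N / 2) with hxh | hxh
  · have := Real.rpow_le_rpow_of_nonpos (by linarith : 0 < N / 2) (by linarith : N / 2 ≤ N - x)
      (neg_nonpos.2 hγ)
    nlinarith [Real.rpow_nonneg hx0.le (-α)]
  · have := Real.rpow_le_rpow_of_nonpos (by linarith : 0 < N / 2) hxh (neg_nonpos.2 hα)
    nlinarith [Real.rpow_nonneg hxN.le (-γ)]

theorem intervalIntegrable_betaKernel (hα₀ : 0 ≤ α) (hα₁ : α < 1) (hγ₀ : 0 ≤ γ)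
    (hγ₁ : γ < 1) (hN : 0 < N) :
    IntervalIntegrable (betaKernel α γ N) volume 0 N := by
  have hleft : IntervalIntegrable (fun x => x ^ (-α)) volume 0 N :=
    intervalIntegral.intervalIntegrable_rpow' (by linarith)
  have hright : IntervalIntegrable (fun x => (N - x) ^ (-γ)) volume 0 N := by
    simpa using (intervalIntegral.intervalIntegrable_rpow' (a := 0) (b := N)
      (by linarith : -1 < -γ)).comp_sub_left N |>.symm
  refine ((hleft.const_mul ((N / 2) ^ (-γ))).add
    (hright.const_mul ((N / 2) ^ (-α)))).mono_fun'
    (measurable_betaKernel α γ N).aestronglyMeasurable ?_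
  rw [uIoc_of_le hN.le, ← Measure.restrict_congr_set Ioo_ae_eq_Ioc]
  filter_upwards [ae_restrict_mem measurableSet_Ioo] with x hx
  rw [Real.norm_of_nonneg (betaKernel_nonneg (Ioo_subset_Icc_self hx))]
  exact betaKernel_le_add hα₀ hγ₀ hx

theorem integral_betaKernel (hN : 0 < N) :
    ∫ x in (0 : ℝ)..N, betaKernel α γ N x =
      (∫ x in (0 : ℝ)..1, betaKernel α γ 1 x) * N ^ (1 - γ - α) := by
  have hscale : ∀ t ∈ uIcc (0 : ℝ) 1,
      betaKernel α γ N (N * t) = N ^ (-(α + γ)) * betaKernel α γ 1 t := by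
    intro t ht
    rw [uIcc_of_le zero_le_one] at ht
    simp only [betaKernel]
    rw [Real.mul_rpow hN.le ht.1, show N - N * t = N * (1 - t) by ring,
      Real.mul_rpow hN.le (sub_nonneg.2 ht.2), Real.rpow_neg hN.le, Real.rpow_add hN]
    field_simp
  calc ∫ x in (0 : ℝ)..N, betaKernel α γ N x
      = N * ∫ t in (0 : ℝ)..1, betaKernel α γ N (N * t) := by
        rw [intervalIntegral.integral_comp_mul_left _ hN.ne', mul_zero, mul_one, smul_eq_mul,
          mul_inv_cancel_left₀ hN.ne']
    _ = N * ∫ t in (0 : ℝ)..1, N ^ (-(α + γ)) * betaKernel α γ 1 t := by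
        rw [intervalIntegral.integral_congr hscale]
    _ = (∫ x in (0 : ℝ)..1, betaKernel α γ 1 x) * N ^ (1 - γ - α) := by
        rw [intervalIntegral.integral_const_mul, show 1 - γ - α = 1 + -(α + γ) by ring,
          Real.rpow_add hN, Real.rpow_one]
        ring

theorem sum_betaKernel_le_integral (hα₀ : 0 ≤ α) (hα₁ : α < 1) (hγ₀ : 0 ≤ γ) (hγ₁ : γ < 1)
    {n : ℕ} (hn : 1 ≤ n) :
    ∑ k ∈ Finset.Ico 1 n, betaKernel α γ n k ≤ ∫ x in (0 : ℝ)..n, betaKernel α γ n x := by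
  have hn' : (1 : ℝ) ≤ n := by exact_mod_cast hn
  have hint := intervalIntegrable_betaKernel hα₀ hα₁ hγ₀ hγ₁ (by linarith : (0 : ℝ) < n)
  have hsub : Icc ((1 : ℕ) - 1 / 2 : ℝ) (n - 1 / 2) ⊆ Icc 0 n :=
    Icc_subset_Icc (by norm_num) (by linarith)
  have hconvex : ConvexOn ℝ (Icc ((1 : ℕ) - 1 / 2 : ℝ) (n - 1 / 2)) (betaKernel α γ n) :=
    (convexOn_betaKernel hα₀ hγ₀).subset
      (fun x hx => ⟨by norm_num at hx; linarith [hx.1], by linarith [hx.2]⟩) (convex_Icc _ _)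
  calc ∑ k ∈ Finset.Ico 1 n, betaKernel α γ n k
      ≤ ∫ x in ((1 : ℕ) - 1 / 2 : ℝ)..(n - 1 / 2), betaKernel α γ n x :=
        hconvex.sum_Ico_le_intervalIntegral hn
          (hint.mono_set (by rwa [uIcc_of_le (by norm_num; linarith), uIcc_of_le (by linarith)]))
    _ ≤ ∫ x in (0 : ℝ)..n, betaKernel α γ n x := by
        refine intervalIntegral.integral_mono_interval (by norm_num) (by norm_num; linarith)
          (by linarith) ?_ hint
        filter_upwards [ae_restrict_mem measurableSet_Ioc] with x hx
        exact betaKernel_nonneg (Ioc_subset_Icc_self hx)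

end BetaKernel

theorem discrete_beta_function_estimate_general
    (α γ : ℝ) (hα : α ∈ Ico (0:ℝ) 1) (hγ : γ ∈ Ico α 1)
    (n : ℕ) :
    ∑ k ∈ Finset.Ico 1 n, 1 / (((n : ℝ) - (k : ℝ)) ^ γ * (k : ℝ) ^ α) ≤
      (∫ x in (0:ℝ)..1, 1 / (x ^ α * (1 - x) ^ γ)) * (n : ℝ) ^ (1 - γ - α) := by
  have hγ₀ : 0 ≤ γ := hα.1.trans hγ.1
  rcases Nat.eq_zero_or_pos n with rfl | hn
  · rw [Finset.Ico_eq_empty_of_le zero_le_one, Finset.sum_empty]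
    exact mul_nonneg (intervalIntegral.integral_nonneg zero_le_one fun x hx => betaKernel_nonneg hx)
      (Real.rpow_nonneg (Nat.cast_nonneg 0) _)
  calc ∑ k ∈ Finset.Ico 1 n, 1 / (((n : ℝ) - (k : ℝ)) ^ γ * (k : ℝ) ^ α)
      = ∑ k ∈ Finset.Ico 1 n, betaKernel α γ n k :=
        Finset.sum_congr rfl fun k _ => by rw [betaKernel, mul_comm]
    _ ≤ ∫ x in (0 : ℝ)..n, betaKernel α γ n x :=
        sum_betaKernel_le_integral hα.1 hα.2 hγ₀ hγ.2 hn
    _ = _ := integral_betaKernel (by exact_mod_cast hn)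

/-- **Lemma 3.9** (discrete Beta-function estimate).
For `α ∈ [0,1)`, `γ ∈ [α,1)` and `n ≥ 2`:
`Σ_{k=1}^{n-1} 1/((n-k)^γ k^α) ≤ B(1-α,1-γ) n^{1-γ-α}`, where
`B(1-α,1-γ) = ∫₀¹ x^{-α}(1-x)^{-γ} dx` is the Euler Beta function. -/
theorem discrete_beta_function_estimate
    (α γ : ℝ) (hα : α ∈ Ico (0:ℝ) 1) (hγ : γ ∈ Ico α 1)
    (n : ℕ) (hn : 2 ≤ n) :
    ∑ k ∈ Finset.Ico 1 n, 1 / (((n : ℝ) - (k : ℝ)) ^ γ * (k : ℝ) ^ α) ≤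
      (∫ x in (0:ℝ)..1, 1 / (x ^ α * (1 - x) ^ γ)) * (n : ℝ) ^ (1 - γ - α) :=
  discrete_beta_function_estimate_general α γ hα hγ n
end
end

section
/- Let Ω ⊂ ℝ³ be a bounded domain with sufficiently smooth boundary, let A = −Δ be the Dirichlet Laplacian on L²(Ω) (with dom(Δ) = H²(Ω) ∩ H₀¹(Ω)), and let B(t) be the multiplication operator by V(t,·), where V : [0,T] × Ω → ℝ is measurable, real and non-negative. If V ∈ L^∞([0,T], L^{2+ε}(Ω)) ∩ C^β([0,T], L^{1+ε}(Ω)) for some β ∈ (0,1) and ε > 0, then the assumptions (S1)–(S3) are satisfied with any α ∈ [3/4, 1): dom((−Δ)^α) ⊆ dom(B(t)) for a.e. t, the map t ↦ B(t)(−Δ)^{-α} is essentially operator-norm bounded, and the map t ↦ (−Δ)^{-α}B(t)(−Δ)^{-α} is Hölder continuous in operator norm with exponent β. -/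
/-!
Hölder's inequality with `1/(2+ε) + 1/q = 1/2` and the Sobolev bound `‖(-Δ)^{-α} u‖_q ≲ ‖u‖₂`
make `V(t) (-Δ)^{-α}` bounded on `L²`, with norm `≲ ‖V(t)‖_{2+ε}`.
For (S3) put `W = V(t) - V(s)` and `v = (-Δ)^{-α} W (-Δ)^{-α} u`. Self-adjointness of `(-Δ)^{-α}`
gives `‖v‖² = ⟪(-Δ)^{-α} v, W (-Δ)^{-α} u⟫`, and Hölder's inequality for the three factors
`(-Δ)^{-α} v ∈ L^r`, `W ∈ L^{1+ε}`, `(-Δ)^{-α} u ∈ L^r`, where `2/r + 1/(1+ε) = 1`, bounds this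
by `C_r² ‖W‖_{1+ε} ‖v‖ ‖u‖`.
-/

open MeasureTheory Set ContinuousLinearMap

noncomputable section

theorem Real.holderTriple_two_mul_div_sub_two {p : ℝ} (hp : 2 < p) :
    p.HolderTriple (2 * p / (p - 2)) 2 where
  inv_add_inv_eq_inv := by
    have : p - 2 ≠ 0 := by linarith
    field_simp
    ring
  left_pos := by linarith
  right_pos := div_pos (by linarith) (by linarith)

theorem Real.holderTriple_two_mul_div_sub_one {p : ℝ} (hp : 1 < p) :
    p.HolderTriple (2 * p / (p - 1)) (2 * p / (p + 1)) where
  inv_add_inv_eq_inv := by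
    have : p - 1 ≠ 0 := by linarith
    field_simp
    ring
  left_pos := by linarith
  right_pos := div_pos (by linarith) (by linarith)

theorem Real.holderConjugate_two_mul_div_sub_one {p : ℝ} (hp : 1 < p) :
    (2 * p / (p - 1)).HolderConjugate (2 * p / (p + 1)) where
  inv_add_inv_eq_inv := by
    have : p - 1 ≠ 0 := by linarith
    field_simp
    ring
  left_pos := div_pos (by linarith) (by linarith)
  right_pos := div_pos (by linarith) (by linarith)

open scoped ENNReal InnerProductSpace

namespace MeasureTheory

variable {α 𝕜 : Type*} [MeasurableSpace α] {μ : Measure α} [RCLike 𝕜]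

theorem eLpNorm_ofReal_comp (f : α → ℝ) (p : ℝ≥0∞) :
    eLpNorm (fun x => (f x : 𝕜)) p μ = eLpNorm f p μ :=
  eLpNorm_congr_norm_ae (.of_forall fun x => by simp)

theorem L2.enorm_inner_le_eLpNorm_mul_eLpNorm {E : Type*} [NormedAddCommGroup E]
    [InnerProductSpace 𝕜 E] {r s : ℝ≥0∞} [ENNReal.HolderConjugate r s] (f g : Lp E 2 μ) :
    ‖⟪f, g⟫_𝕜‖ₑ ≤ eLpNorm f r μ * eLpNorm g s μ := by
  rw [L2.inner_def]
  refine (enorm_integral_le_lintegral_enorm _).trans ?_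
  rw [← eLpNorm_one_eq_lintegral_enorm]
  simpa using eLpNorm_le_eLpNorm_mul_eLpNorm_of_nnnorm (Lp.aestronglyMeasurable f)
    (Lp.aestronglyMeasurable g) (fun a b => ⟪a, b⟫_𝕜) 1
    (.of_forall fun x => by simpa using nnnorm_inner_le_nnnorm (𝕜 := 𝕜) (f x) (g x))

variable {E : Type*} [NormedAddCommGroup E] [NormedSpace 𝕜 E]

theorem exists_clm_ae_eq_mul_and_norm_le {p q : ℝ≥0∞} [ENNReal.HolderTriple p q 2]
    (A : E →L[𝕜] Lp 𝕜 2 μ) {C : ℝ} (hC : 0 ≤ C)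
    (hA : ∀ u, eLpNorm (A u) q μ ≤ ENNReal.ofReal (C * ‖u‖))
    {g : α → 𝕜} (hg : AEStronglyMeasurable g μ) {K : ℝ} (hK : 0 ≤ K)
    (hgK : eLpNorm g p μ ≤ ENNReal.ofReal K) :
    ∃ M : E →L[𝕜] Lp 𝕜 2 μ, (∀ u, M u =ᵐ[μ] fun x => g x * A u x) ∧ ‖M‖ ≤ K * C := by
  have hbound : ∀ u, eLpNorm (fun x => g x * A u x) 2 μ ≤ ENNReal.ofReal (K * C * ‖u‖) :=
    fun u => calc
      eLpNorm (fun x => g x * A u x) 2 μ ≤ eLpNorm g p μ * eLpNorm (A u) q μ :=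
        eLpNorm_smul_le_mul_eLpNorm (Lp.aestronglyMeasurable (A u)) hg (𝕜 := 𝕜) (E := 𝕜)
      _ ≤ ENNReal.ofReal K * ENNReal.ofReal (C * ‖u‖) := mul_le_mul' hgK (hA u)
      _ = ENNReal.ofReal (K * C * ‖u‖) := by rw [← ENNReal.ofReal_mul hK, mul_assoc]
  have hmem : ∀ u, MemLp (fun x => g x * A u x) 2 μ := fun u =>
    ⟨hg.mul (Lp.aestronglyMeasurable _), (hbound u).trans_lt ENNReal.ofReal_lt_top⟩
  let L : E →ₗ[𝕜] Lp 𝕜 2 μ :=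
    { toFun := fun u => (hmem u).toLp
      map_add' := fun u v => by
        rw [← MemLp.toLp_add]
        refine MemLp.toLp_congr _ _ ?_
        filter_upwards [Lp.coeFn_add (A u) (A v)] with x hx
        simp only [map_add, Pi.add_apply]
        rw [hx, Pi.add_apply, mul_add]
      map_smul' := fun c u => by
        rw [RingHom.id_apply, ← MemLp.toLp_const_smul]
        refine MemLp.toLp_congr _ _ ?_
        filter_upwards [Lp.coeFn_smul c (A u)] with x hx
        simp only [map_smul, Pi.smul_apply]
        rw [hx, Pi.smul_apply, smul_eq_mul, smul_eq_mul, mul_left_comm] }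
  refine ⟨L.mkContinuous (K * C) fun u => ?_, fun u => (hmem u).coeFn_toLp,
    LinearMap.mkContinuous_norm_le _ (mul_nonneg hK hC) _⟩
  exact (Lp.norm_toLp _ (hmem u)).trans_le
    (ENNReal.toReal_le_of_le_ofReal (by positivity) (hbound u))

theorem _root_.IsSelfAdjoint.norm_comp_le_of_ae_eq_mul {p r s : ℝ≥0∞}
    [ENNReal.HolderTriple p r s] [ENNReal.HolderConjugate r s]
    {A M : Lp 𝕜 2 μ →L[𝕜] Lp 𝕜 2 μ} (hA : IsSelfAdjoint A)
    {C : ℝ} (hC : 0 ≤ C) (hAr : ∀ u, eLpNorm (A u) r μ ≤ ENNReal.ofReal (C * ‖u‖))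
    {h : α → 𝕜} (hh : AEStronglyMeasurable h μ) {K : ℝ} (hK : 0 ≤ K)
    (hhK : eLpNorm h p μ ≤ ENNReal.ofReal K) (hM : ∀ u, M u =ᵐ[μ] fun x => h x * A u x) :
    ‖A ∘L M‖ ≤ C * K * C := by
  refine opNorm_le_bound _ (by positivity) fun u => ?_
  set v := A (M u)
  have hMu : eLpNorm (M u) s μ ≤ ENNReal.ofReal (K * (C * ‖u‖)) := calc
    eLpNorm (M u) s μ = eLpNorm (fun x => h x * A u x) s μ := eLpNorm_congr_ae (hM u)
    _ ≤ eLpNorm h p μ * eLpNorm (A u) r μ :=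
        eLpNorm_smul_le_mul_eLpNorm (Lp.aestronglyMeasurable (A u)) hh (𝕜 := 𝕜) (E := 𝕜)
    _ ≤ ENNReal.ofReal K * ENNReal.ofReal (C * ‖u‖) := mul_le_mul' hhK (hAr u)
    _ = ENNReal.ofReal (K * (C * ‖u‖)) := (ENNReal.ofReal_mul hK).symm
  have hv : ‖v‖ ^ 2 ≤ ‖v‖ * (C * K * C * ‖u‖) := calc
    ‖v‖ ^ 2 = RCLike.re ⟪v, v⟫_𝕜 := (inner_self_eq_norm_sq v).symm
    _ = RCLike.re ⟪A v, M u⟫_𝕜 := congrArg RCLike.re (hA.isSymmetric v (M u)).symm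
    _ ≤ ‖⟪A v, M u⟫_𝕜‖ := RCLike.re_le_norm _
    _ ≤ C * ‖v‖ * (K * (C * ‖u‖)) := by
      rw [← ENNReal.ofReal_le_ofReal_iff (by positivity), ofReal_norm,
        ENNReal.ofReal_mul (by positivity)]
      exact (L2.enorm_inner_le_eLpNorm_mul_eLpNorm _ _).trans (mul_le_mul' (hAr v) hMu)
    _ = ‖v‖ * (C * K * C * ‖u‖) := by ring
  show ‖v‖ ≤ C * K * C * ‖u‖
  nlinarith [norm_nonneg v, show 0 ≤ C * K * C * ‖u‖ by positivity]

end MeasureTheory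

theorem dirichlet_laplacian_time_dependent_potential_example_general
    (Ω : Set (EuclideanSpace ℝ (Fin 3)))
    (T : ℝ)
    -- the Dirichlet Laplacian `-Δ`, a positive self-adjoint operator on `L²(Ω)` with
    -- `inf σ(-Δ) ≥ c > 0`, encoded through its bounded fractional powers `Pm a = (-Δ)^{-a}`
    (Pm : ℝ → Lp ℂ 2 (volume.restrict Ω) →L[ℂ] Lp ℂ 2 (volume.restrict Ω))
    (hPm_pos : ∀ ⦃a : ℝ⦄, 0 ≤ a → (Pm a).IsPositive)
    -- Sobolev embedding: `dom((-Δ)^a) = H₀^{2a}(Ω) ⊆ L^q(Ω)` for `a ≥ 3/4` and `q ∈ [2,∞)`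
    (hSobolev : ∀ a : ℝ, 3 / 4 ≤ a → ∀ q : ℝ, 2 ≤ q → ∃ Cq : ℝ, 0 < Cq ∧
      ∀ u : Lp ℂ 2 (volume.restrict Ω),
        eLpNorm (Pm a u) (ENNReal.ofReal q) (volume.restrict Ω) ≤
          ENNReal.ofReal (Cq * ‖u‖))
    -- the potential: measurable, real, non-negative, with
    -- `V ∈ L^∞([0,T],L^{2+ε}(Ω)) ∩ C^β([0,T],L^{1+ε}(Ω))`
    (V : ℝ → EuclideanSpace ℝ (Fin 3) → ℝ)
    (hV_meas : Measurable (Function.uncurry V))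
    (β ε : ℝ) (hε : 0 < ε)
    (CV : ℝ) (hV_bdd : ∀ t ∈ Icc (0:ℝ) T,
      eLpNorm (fun x => V t x) (ENNReal.ofReal (2 + ε)) (volume.restrict Ω) ≤
        ENNReal.ofReal CV)
    (LV : ℝ) (hV_holder : ∀ t ∈ Icc (0:ℝ) T, ∀ s ∈ Icc (0:ℝ) T,
      eLpNorm (fun x => V t x - V s x) (ENNReal.ofReal (1 + ε)) (volume.restrict Ω) ≤
        ENNReal.ofReal (LV * |t - s| ^ β)) :
    ∀ a : ℝ, 3 / 4 ≤ a → a < 1 →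
      ∃ BAm : ℝ → Lp ℂ 2 (volume.restrict Ω) →L[ℂ] Lp ℂ 2 (volume.restrict Ω),
        -- `BAm t = B(t)(-Δ)^{-a}`, i.e. `dom((-Δ)^a) ⊆ dom(B(t))` and
        -- `(B(t)(-Δ)^{-a}u)(x) = V(t,x) ((-Δ)^{-a}u)(x)`
        (∀ t ∈ Icc (0:ℝ) T, ∀ u : Lp ℂ 2 (volume.restrict Ω),
          (BAm t u : _ → ℂ) =ᵐ[volume.restrict Ω] fun x => (V t x : ℂ) * (Pm a u) x) ∧
        -- (S2): essential operator-norm boundedness of `t ↦ B(t)(-Δ)^{-a}`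
        (∃ C : ℝ, ∀ t ∈ Icc (0:ℝ) T, ‖BAm t‖ ≤ C) ∧
        -- (S3): operator-norm Hölder continuity of `t ↦ (-Δ)^{-a}B(t)(-Δ)^{-a}`
        (∃ Lh : ℝ, 0 < Lh ∧ ∀ t ∈ Icc (0:ℝ) T, ∀ s ∈ Icc (0:ℝ) T,
          ‖Pm a ∘L (BAm t - BAm s)‖ ≤ Lh * |t - s| ^ β) := by
  intro a ha _
  have hV_meas_t : ∀ t, Measurable (V t) := fun t => hV_meas.comp measurable_prodMk_left
  have hS2 := Real.holderTriple_two_mul_div_sub_two (p := 2 + ε) (by linarith)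
  have hS3 := Real.holderTriple_two_mul_div_sub_one (p := 1 + ε) (by linarith)
  obtain ⟨Cq, hCq, hSobolev_q⟩ := hSobolev a ha _ hS2.symm.lt.le
  obtain ⟨Cr, hCr, hSobolev_r⟩ := hSobolev a ha (2 * (1 + ε) / (1 + ε - 1))
    (by rw [le_div_iff₀ (by linarith)]; linarith)
  have : ENNReal.HolderTriple _ _ 2 := ENNReal.ofReal_ofNat 2 ▸ hS2.ennrealOfReal
  have hB : ∀ t ∈ Icc (0:ℝ) T, ∃ M : Lp ℂ 2 (volume.restrict Ω) →L[ℂ] Lp ℂ 2 (volume.restrict Ω),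
      (∀ u, M u =ᵐ[volume.restrict Ω] fun x => (V t x : ℂ) * Pm a u x) ∧
        ‖M‖ ≤ max CV 0 * Cq :=
    fun t ht => exists_clm_ae_eq_mul_and_norm_le (Pm a) hCq.le hSobolev_q
      (hV_meas_t t).complex_ofReal.aestronglyMeasurable (le_max_right _ _)
      ((eLpNorm_ofReal_comp _ _).trans_le
        ((hV_bdd t ht).trans (ENNReal.ofReal_le_ofReal (le_max_left _ _))))
  choose! BAm hBAm_eq hBAm_norm using hB
  refine ⟨BAm, hBAm_eq, ⟨_, hBAm_norm⟩, Cr * max LV 1 * Cr, by positivity, fun t ht s hs => ?_⟩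
  have hdiff : ∀ u, (BAm t - BAm s) u =ᵐ[volume.restrict Ω]
      fun x => ((V t - V s) x : ℂ) * Pm a u x := fun u => by
    rw [sub_apply]
    filter_upwards [Lp.coeFn_sub (BAm t u) (BAm s u), hBAm_eq t ht u, hBAm_eq s hs u]
      with x hsub hBt hBs
    rw [hsub, Pi.sub_apply, hBt, hBs, Pi.sub_apply]
    push_cast
    ring
  have hdiff_norm : eLpNorm (fun x => ((V t - V s) x : ℂ)) (ENNReal.ofReal (1 + ε))
      (volume.restrict Ω) ≤ ENNReal.ofReal (max LV 1 * |t - s| ^ β) :=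
    (eLpNorm_ofReal_comp _ _).trans_le ((hV_holder t ht s hs).trans
      (ENNReal.ofReal_le_ofReal (by gcongr; exact le_max_left _ _)))
  have := hS3.ennrealOfReal
  have := (Real.holderConjugate_two_mul_div_sub_one (p := 1 + ε) (by linarith)).ennrealOfReal
  calc ‖Pm a ∘L (BAm t - BAm s)‖ ≤ Cr * (max LV 1 * |t - s| ^ β) * Cr :=
        (hPm_pos (by linarith)).isSelfAdjoint.norm_comp_le_of_ae_eq_mul
          (s := ENNReal.ofReal (2 * (1 + ε) / (1 + ε + 1))) hCr.le hSobolev_r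
          ((hV_meas_t t).sub (hV_meas_t s)).complex_ofReal.aestronglyMeasurable (by positivity)
          hdiff_norm hdiff
    _ = Cr * max LV 1 * Cr * |t - s| ^ β := by ring

/-- **Theorem 4.1** (example: diffusion equation with a time-dependent potential).
For the Dirichlet Laplacian `-Δ` on a bounded domain `Ω ⊂ ℝ³` (encoded through its bounded
fractional powers `Pm a = (-Δ)^{-a}` together with the Sobolev embedding
`dom((-Δ)^a) ⊆ L^q(Ω)` for `a ≥ 3/4`, `q ∈ [2,∞)`) and the multiplication operators
`B(t) = V(t,·)` with `V ≥ 0`, `V ∈ L^∞([0,T],L^{2+ε}) ∩ C^β([0,T],L^{1+ε})`, the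
assumptions (S2) and (S3) hold for every `α ∈ [3/4,1)`: there is a bounded family
`BAm t = B(t)(-Δ)^{-a}`, essentially operator-norm bounded, and
`t ↦ (-Δ)^{-a}B(t)(-Δ)^{-a}` is operator-norm Hölder continuous with exponent `β`. -/
theorem dirichlet_laplacian_time_dependent_potential_example
    (Ω : Set (EuclideanSpace ℝ (Fin 3))) (hΩ_open : IsOpen Ω)
    (hΩ_bdd : Bornology.IsBounded Ω)
    (T : ℝ) (hT : 0 < T)
    -- the Dirichlet Laplacian `-Δ`, a positive self-adjoint operator on `L²(Ω)` with
    -- `inf σ(-Δ) ≥ c > 0`, encoded through its bounded fractional powers `Pm a = (-Δ)^{-a}`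
    (Pm : ℝ → Lp ℂ 2 (volume.restrict Ω) →L[ℂ] Lp ℂ 2 (volume.restrict Ω))
    (hPm_zero : Pm 0 = 1)
    (hPm_add : ∀ ⦃a b : ℝ⦄, 0 ≤ a → 0 ≤ b → Pm (a + b) = Pm a ∘L Pm b)
    (hPm_pos : ∀ ⦃a : ℝ⦄, 0 ≤ a → (Pm a).IsPositive)
    (hPm_inj : ∀ ⦃a : ℝ⦄, 0 ≤ a → Function.Injective (Pm a))
    (c : ℝ) (hc : 0 < c) (hPm_norm : ∀ ⦃a : ℝ⦄, 0 ≤ a → ‖Pm a‖ ≤ c ^ (-a))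
    -- Sobolev embedding: `dom((-Δ)^a) = H₀^{2a}(Ω) ⊆ L^q(Ω)` for `a ≥ 3/4` and `q ∈ [2,∞)`
    (hSobolev : ∀ a : ℝ, 3 / 4 ≤ a → ∀ q : ℝ, 2 ≤ q → ∃ Cq : ℝ, 0 < Cq ∧
      ∀ u : Lp ℂ 2 (volume.restrict Ω),
        eLpNorm (Pm a u) (ENNReal.ofReal q) (volume.restrict Ω) ≤
          ENNReal.ofReal (Cq * ‖u‖))
    -- the potential: measurable, real, non-negative, with
    -- `V ∈ L^∞([0,T],L^{2+ε}(Ω)) ∩ C^β([0,T],L^{1+ε}(Ω))`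
    (V : ℝ → EuclideanSpace ℝ (Fin 3) → ℝ)
    (hV_meas : Measurable (Function.uncurry V))
    (hV_nonneg : ∀ t x, 0 ≤ V t x)
    (β ε : ℝ) (hβ : β ∈ Ioo (0:ℝ) 1) (hε : 0 < ε)
    (CV : ℝ) (hV_bdd : ∀ t ∈ Icc (0:ℝ) T,
      eLpNorm (fun x => V t x) (ENNReal.ofReal (2 + ε)) (volume.restrict Ω) ≤
        ENNReal.ofReal CV)
    (LV : ℝ) (hV_holder : ∀ t ∈ Icc (0:ℝ) T, ∀ s ∈ Icc (0:ℝ) T,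
      eLpNorm (fun x => V t x - V s x) (ENNReal.ofReal (1 + ε)) (volume.restrict Ω) ≤
        ENNReal.ofReal (LV * |t - s| ^ β)) :
    ∀ a : ℝ, 3 / 4 ≤ a → a < 1 →
      ∃ BAm : ℝ → Lp ℂ 2 (volume.restrict Ω) →L[ℂ] Lp ℂ 2 (volume.restrict Ω),
        -- `BAm t = B(t)(-Δ)^{-a}`, i.e. `dom((-Δ)^a) ⊆ dom(B(t))` and
        -- `(B(t)(-Δ)^{-a}u)(x) = V(t,x) ((-Δ)^{-a}u)(x)`
        (∀ t ∈ Icc (0:ℝ) T, ∀ u : Lp ℂ 2 (volume.restrict Ω),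
          (BAm t u : _ → ℂ) =ᵐ[volume.restrict Ω] fun x => (V t x : ℂ) * (Pm a u) x) ∧
        -- (S2): essential operator-norm boundedness of `t ↦ B(t)(-Δ)^{-a}`
        (∃ C : ℝ, ∀ t ∈ Icc (0:ℝ) T, ‖BAm t‖ ≤ C) ∧
        -- (S3): operator-norm Hölder continuity of `t ↦ (-Δ)^{-a}B(t)(-Δ)^{-a}`
        (∃ Lh : ℝ, 0 < Lh ∧ ∀ t ∈ Icc (0:ℝ) T, ∀ s ∈ Icc (0:ℝ) T,
          ‖Pm a ∘L (BAm t - BAm s)‖ ≤ Lh * |t - s| ^ β) :=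
  dirichlet_laplacian_time_dependent_potential_example_general Ω T Pm hPm_pos hSobolev V hV_meas β ε
    hε CV hV_bdd LV hV_holder
end
end
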